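/- Main theorem: Given a countable family of sequences ((a_{i,j})_j)_i over a set X as input, the output (b_n) of the sequence interleaving algorithm is eventually periodic if and only if at least one input sequence (a_{i,j})_j is eventually periodic. -/

import Mathlib

/-- the n-th triangular number -/
def tri (n : ℕ) : ℕ := n * (n + 1) / 2

/-- the diagonal index sequence `1, 2, 1, 2, 3, 1, 2, 3, 4, …` (for `k ≥ 1`):
`idx k = k − tri n + 1` for the unique `n` with `tri n ≤ k < tri (n+1)`. -/
def idx (k : ℕ) : ℕ := k - tri ((Nat.sqrt (8 * k + 1) - 1) / 2) + 1

/-- the minimal (finite) period of a list, if it has one -/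
def listPeriod? {X : Type*} [DecidableEq X] (L : List X) : Option ℕ :=
  (List.range L.length).find? fun k =>
    decide (0 < k) && (L.drop k == L.take (L.length - k))

/-- the block of length `n` following the cyclic repetition of the pattern `S`,
starting at phase `ph` -/
def patternBlock {X : Type*} (S : List X) (d : X) (ph n : ℕ) : List X :=
  (List.range n).map fun j => S.getD ((ph + j) % S.length) d

/-- the state of the sequence interleaving algorithm: `k` is the pointer into the
diagonal index sequence, `used i` is the number of terms already removed from input
sequence `i`, and `flag` is `some (S, ph)` when the Boolean flag `P` is true with
current finite-fundamental string `S` and phase `ph`, and `none` when `P` is false. -/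
structure IState (X : Type*) where
  k : ℕ
  used : ℕ → ℕ
  flag : Option (List X × ℕ)

/-- one stage of the sequence interleaving algorithm: from state `s`, form block `B_l`
by removing `2^l` terms from the beginning of the unused part of input sequence
`idx s.k`, then check/update the periodicity flag, incrementing `k` exactly when the
flag ends up false.  Returns the new state together with the block produced. -/
def step {X : Type*} [DecidableEq X] (a : ℕ → ℕ → X) (s : IState X) (l : ℕ) :
    IState X × List X :=
  let i := idx s.k
  let B := (List.range (2 ^ l)).map fun j => a i (s.used i + 1 + j)
  let used' := fun i' => if i' = i then s.used i + 2 ^ l else s.used i'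
  match s.flag with
  | none =>
    match listPeriod? B with
    | some p => (⟨s.k, used', some (B.take p, 2 ^ l % p)⟩, B)
    | none => (⟨s.k + 1, used', none⟩, B)
  | some (S, ph) =>
    if B = patternBlock S (a 1 1) ph (2 ^ l) then
      (⟨s.k, used', some (S, (ph + 2 ^ l) % S.length)⟩, B)
    else (⟨s.k + 1, used', none⟩, B)

/-- `run a l` is the state of the interleaving algorithm after producing blocks
`B_1, …, B_l`, starting from `k = 1`, nothing used, and flag `P = false`. -/
def run {X : Type*} [DecidableEq X] (a : ℕ → ℕ → X) : ℕ → IState X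
  | 0 => ⟨1, fun _ => 0, none⟩
  | n + 1 => (step a (run a n) (n + 1)).1

/-- `block a l` is the block `B_l` (of length `2^l`) produced by the algorithm. -/
def block {X : Type*} [DecidableEq X] (a : ℕ → ℕ → X) (l : ℕ) : List X :=
  (step a (run a (l - 1)) l).2

/-- the output sequence of the sequence interleaving algorithm (1-indexed): the
concatenation `B_1 + B_2 + ⋯`, so position `n` lies in block `l = log₂ (n+1)`,
which occupies positions `2^l − 1` through `2^(l+1) − 2`. -/
def output {X : Type*} [DecidableEq X] (a : ℕ → ℕ → X) (n : ℕ) : X :=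
  (block a (Nat.log2 (n + 1))).getD (n + 1 - 2 ^ Nat.log2 (n + 1)) (a 1 1)

/-- a sequence (with relevant indices `≥ 1`) is eventually periodic -/
def EvPeriodic {X : Type*} (b : ℕ → X) : Prop :=
  ∃ m, 1 ≤ m ∧ ∃ r, ∀ n > r, b (n + m) = b n

section
variable {X : Type*} [DecidableEq X]

lemma getElem_idx_congr (L : List X) {i j : ℕ} (h : i = j) (hi : i < L.length) :
    L[i]'hi = L[j]'(h ▸ hi) := by subst h; rfl

lemma drop_eq_take_iff {L : List X} {k : ℕ} (hk : k ≤ L.length) :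
    L.drop k = L.take (L.length - k) ↔
      ∀ j (h : j + k < L.length), L[j + k] = L[j]'(by omega) := by
  constructor
  · intro h j hj
    have h1 : (L.drop k)[j]'(by simp; omega) = (L.take (L.length - k))[j]'(by simp; omega) := by
      simp_rw [h]
    simpa [List.getElem_drop, List.getElem_take, Nat.add_comm k j] using h1
  · intro h
    apply List.ext_getElem
    · simp
    · intro j h1 h2
      simp only [List.getElem_drop, List.getElem_take]
      have := h j (by simp at h1; omega)
      rw [getElem_idx_congr L (Nat.add_comm k j)]
      exact this

lemma listPeriod?_eq_some {L : List X} {p : ℕ} (h : listPeriod? L = some p) :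
    0 < p ∧ p < L.length ∧ L.drop p = L.take (L.length - p) ∧
      ∀ q, 0 < q → q < p → L.drop q ≠ L.take (L.length - q) := by
  unfold listPeriod? at h
  rw [List.find?_eq_some_iff_getElem] at h
  obtain ⟨hp, i, hi, hip, hmin⟩ := h
  simp only [List.getElem_range] at hip hmin
  subst hip
  simp only [Bool.and_eq_true, decide_eq_true_eq, beq_iff_eq] at hp
  refine ⟨hp.1, by simpa using hi, hp.2, ?_⟩
  intro q hq0 hqp hq
  have := hmin q hqp
  simp [hq0, hq] at this

lemma listPeriod?_le {L : List X} {q : ℕ} (h0 : 0 < q) (h1 : q < L.length)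
    (h2 : L.drop q = L.take (L.length - q)) :
    ∃ p, listPeriod? L = some p ∧ p ≤ q := by
  have hs : (listPeriod? L).isSome := by
    unfold listPeriod?
    rw [List.find?_isSome]
    exact ⟨q, by simpa using h1, by simp [h0, h2]⟩
  obtain ⟨p, hp⟩ := Option.isSome_iff_exists.mp hs
  refine ⟨p, hp, ?_⟩
  obtain ⟨_, _, _, hmin⟩ := listPeriod?_eq_some hp
  by_contra hlt
  exact hmin q h0 (by omega) h2

end
section
variable {X : Type*} [DecidableEq X] (a : ℕ → ℕ → X)

lemma step_snd (s : IState X) (l : ℕ) :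
    (step a s l).2 = (List.range (2 ^ l)).map fun j => a (idx s.k) (s.used (idx s.k) + 1 + j) := by
  unfold step
  rcases h : s.flag with _ | ⟨S, ph⟩ <;> simp only [h]
  · rcases h2 : listPeriod? ((List.range (2 ^ l)).map fun j => a (idx s.k) (s.used (idx s.k) + 1 + j)) with _ | p <;> simp [h2]
  · split <;> rfl

lemma step_used (s : IState X) (l : ℕ) :
    (step a s l).1.used = fun i' =>
      if i' = idx s.k then s.used (idx s.k) + 2 ^ l else s.used i' := by
  unfold step
  rcases h : s.flag with _ | ⟨S, ph⟩ <;> simp only [h]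
  · rcases h2 : listPeriod? ((List.range (2 ^ l)).map fun j => a (idx s.k) (s.used (idx s.k) + 1 + j)) with _ | p <;> simp [h2]
  · split <;> rfl

lemma step_k_flag (s : IState X) (l : ℕ) :
    ((step a s l).1.flag = none ∧ (step a s l).1.k = s.k + 1) ∨
      ((step a s l).1.flag ≠ none ∧ (step a s l).1.k = s.k) := by
  unfold step
  rcases h : s.flag with _ | ⟨S, ph⟩ <;> simp only [h]
  · rcases h2 : listPeriod? ((List.range (2 ^ l)).map fun j => a (idx s.k) (s.used (idx s.k) + 1 + j)) with _ | p <;> simp [h2]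
  · split <;> simp

lemma block_eq (l : ℕ) :
    block a l = (List.range (2 ^ l)).map fun j =>
      a (idx (run a (l - 1)).k) ((run a (l - 1)).used (idx (run a (l - 1)).k) + 1 + j) := by
  unfold block; exact step_snd a _ l

lemma block_length (l : ℕ) : (block a l).length = 2 ^ l := by
  rw [block_eq]; simp

lemma log2_pow_add {l j : ℕ} (hl : 1 ≤ l) (hj : j < 2 ^ l) : Nat.log2 (2 ^ l + j) = l := by
  rw [Nat.log2_eq_log_two]
  refine Nat.log_eq_of_pow_le_of_lt_pow (by omega) ?_
  rw [pow_succ]; omega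

lemma output_block {l j : ℕ} (hl : 1 ≤ l) (hj : j < 2 ^ l) :
    output a (2 ^ l - 1 + j) = (block a l).getD j (a 1 1) := by
  have h2 : 1 ≤ 2 ^ l := Nat.one_le_two_pow
  have h1 : 2 ^ l - 1 + j + 1 = 2 ^ l + j := by omega
  unfold output
  rw [h1, log2_pow_add hl hj]
  congr 1
  omega

lemma output_block' {l j : ℕ} (hl : 1 ≤ l) (hj : j < 2 ^ l) :
    output a (2 ^ l - 1 + j) =
      a (idx (run a (l - 1)).k) ((run a (l - 1)).used (idx (run a (l - 1)).k) + 1 + j) := by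
  rw [output_block a hl hj, block_eq]
  rw [List.getD_eq_getElem _ _ (by simpa using hj)]
  simp

end
section
set_option linter.unusedSectionVars false
variable {X : Type*} [DecidableEq X] (a : ℕ → ℕ → X)

lemma run_succ (l : ℕ) : run a (l + 1) = (step a (run a l) (l + 1)).1 := rfl

lemma k_flag_succ (l : ℕ) :
    ((run a (l + 1)).flag = none ∧ (run a (l + 1)).k = (run a l).k + 1) ∨
      ((run a (l + 1)).flag ≠ none ∧ (run a (l + 1)).k = (run a l).k) := by
  rw [run_succ]; exact step_k_flag a _ _

lemma k_le (l : ℕ) : (run a l).k ≤ l + 1 := by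
  induction l with
  | zero => exact le_refl 1
  | succ n ih => rcases k_flag_succ a n with ⟨_, h⟩ | ⟨_, h⟩ <;> omega

lemma k_mono {l l' : ℕ} (h : l ≤ l') : (run a l).k ≤ (run a l').k := by
  induction l' with
  | zero => simp_all
  | succ n ih =>
    rcases Nat.lt_or_ge l (n + 1) with h' | h'
    · have := ih (by omega)
      rcases k_flag_succ a n with ⟨_, hk⟩ | ⟨_, hk⟩ <;> omega
    · have : l = n + 1 := by omega
      subst this; rfl

lemma used_succ (l : ℕ) (i : ℕ) :
    (run a (l + 1)).used i =
      if i = idx (run a l).k then (run a l).used (idx (run a l).k) + 2 ^ (l + 1)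
      else (run a l).used i := by
  rw [run_succ, step_used]

lemma used_mono {l l' : ℕ} (h : l ≤ l') (i : ℕ) : (run a l).used i ≤ (run a l').used i := by
  induction l' with
  | zero => simp_all
  | succ n ih =>
    rcases Nat.lt_or_ge l (n + 1) with h' | h'
    · refine le_trans (ih (by omega)) ?_
      rw [used_succ]; split <;> simp_all <;> omega
    · have : l = n + 1 := by omega
      subst this; rfl

lemma flag_spec (l : ℕ) {S : List X} {ph : ℕ} (h : (run a l).flag = some (S, ph)) :
    S ≠ [] := by
  induction l generalizing S ph with
  | zero => simp [run] at h
  | succ n ih =>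
    rw [run_succ] at h
    unfold step at h
    rcases h0 : (run a n).flag with _ | ⟨S0, ph0⟩ <;> simp only [h0] at h
    · rcases h1 : listPeriod? ((List.range (2 ^ (n+1))).map fun j =>
        a (idx (run a n).k) ((run a n).used (idx (run a n).k) + 1 + j)) with _ | p <;>
        simp only [h1] at h
      · simp at h
      · obtain ⟨hp0, hplt, _, _⟩ := listPeriod?_eq_some h1
        simp only [Prod.mk.injEq, Option.some.injEq] at h
        have hS := h.1
        subst hS
        have : p < 2 ^ (n + 1) := by simpa using hplt
        simp only [ne_eq, List.take_eq_nil_iff]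
        intro hc
        rcases hc with hc | hc
        · omega
        · rw [hc] at hplt; simp at hplt
    · split at h
      · simp only [Prod.mk.injEq, Option.some.injEq] at h
        have hS := h.1
        subst hS
        exact ih h0
      · simp at h

end
section
set_option linter.unusedSectionVars false

lemma tri_eight (n : ℕ) : 8 * tri n = 4 * (n * (n + 1)) := by
  obtain ⟨m, hm⟩ := Nat.even_mul_succ_self n
  unfold tri; omega

lemma tri_ge (n : ℕ) : n ≤ tri n := by
  rcases n with _ | m
  · simp [tri]
  · have h := tri_eight (m + 1)
    have h3 : (m + 1) * 2 ≤ (m + 1) * (m + 1 + 1) := Nat.mul_le_mul_left _ (by omega)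
    omega

lemma idx_tri {n j : ℕ} (h : j ≤ n) : idx (tri n + j) = j + 1 := by
  have h8 := tri_eight n
  have hlo : 2 * n + 1 ≤ Nat.sqrt (8 * (tri n + j) + 1) := by
    rw [Nat.le_sqrt]; nlinarith
  have hhi : Nat.sqrt (8 * (tri n + j) + 1) < 2 * n + 3 := by
    rw [Nat.sqrt_lt]; nlinarith
  have hdiv : (Nat.sqrt (8 * (tri n + j) + 1) - 1) / 2 = n := by omega
  unfold idx
  rw [hdiv]
  omega

lemma idx_ge_one (k : ℕ) : 1 ≤ idx k := by unfold idx; omega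

section
variable {X : Type*}

lemma periodic_iter {x : ℕ → X} {p : ℕ} (h : ∀ t, x (t + p) = x t) :
    ∀ q t, x (t + q * p) = x t := by
  intro q
  induction q with
  | zero => simp
  | succ n ih =>
    intro t
    have : t + (n + 1) * p = (t + n * p) + p := by ring
    rw [this, h, ih]

lemma periodic_mod {x : ℕ → X} {p : ℕ} (hp1 : 1 ≤ p) (h : ∀ t, x (t + p) = x t) :
    ∀ t, x t = x (t % p) := by
  intro t
  have hd : t = t % p + t / p * p := by
    conv_lhs => rw [← Nat.mod_add_div t p]
    ring
  conv_lhs => rw [hd]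
  exact periodic_iter h _ _

lemma period_transfer {x : ℕ → X} {m p N : ℕ} (hm1 : 1 ≤ m)
    (hm : ∀ t, x (t + m) = x t) (hp : ∀ j, j + p < N → x (j + p) = x j)
    (hN : p + m ≤ N) : ∀ t, x (t + p) = x t := by
  intro t
  have h1 : x t = x (t % m) := periodic_mod hm1 hm t
  have h2 : x (t + p) = x (t % m + p) := by
    have hd : t + p = (t % m + p) + t / m * m := by
      conv_lhs => rw [show t = t % m + m * (t / m) from (Nat.mod_add_div t m).symm]
      ring
    conv_lhs => rw [hd]
    exact periodic_iter hm _ _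
  rw [h1, h2, hp (t % m) (by have := Nat.mod_lt t (show 0 < m by omega); omega)]

end

lemma exists_pow_decomp {c v : ℕ} (hv : 2 ^ c ≤ v) :
    ∃ t j, j < 2 ^ (c + t) ∧ v = 2 ^ (c + t) + j := by
  have hv0 : v ≠ 0 := by have := Nat.one_le_two_pow (n := c); omega
  have hc : c ≤ Nat.log 2 v := (Nat.le_log_iff_pow_le (by omega) hv0).mpr hv
  refine ⟨Nat.log 2 v - c, v - 2 ^ Nat.log 2 v, ?_, ?_⟩ <;>
  · have h1 : 2 ^ Nat.log 2 v ≤ v := Nat.pow_log_le_self 2 hv0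
    have h2 : v < 2 ^ (Nat.log 2 v + 1) := Nat.lt_pow_succ_log_self (by omega) v
    have h3 : c + (Nat.log 2 v - c) = Nat.log 2 v := by omega
    rw [h3]
    rw [pow_succ] at h2
    omega

end
section
set_option linter.unusedSectionVars false
variable {X : Type*} [DecidableEq X] (a : ℕ → ℕ → X)

lemma patternBlock_getD {S : List X} {d : X} {ph N j : ℕ} (hj : j < N) :
    (patternBlock S d ph N).getD j d = S.getD ((ph + j) % S.length) d := by
  unfold patternBlock
  rw [List.getD_eq_getElem _ _ (by simpa using hj)]
  simp

lemma flag_step_some {l : ℕ} {S : List X} {c : ℕ} (hf : (run a l).flag = some (S, c))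
    (hf' : (run a (l + 1)).flag ≠ none) :
    block a (l + 1) = patternBlock S (a 1 1) c (2 ^ (l + 1)) ∧
    (run a (l + 1)).flag = some (S, (c + 2 ^ (l + 1)) % S.length) ∧
    (run a (l + 1)).k = (run a l).k ∧
    ∀ i', (run a (l + 1)).used i' =
      if i' = idx (run a l).k then (run a l).used (idx (run a l).k) + 2 ^ (l + 1)
      else (run a l).used i' := by
  have hb := block_eq a (l + 1)
  simp only [Nat.add_sub_cancel] at hb
  rw [run_succ] at hf'
  by_cases hcond : ((List.range (2 ^ (l + 1))).map fun j =>
      a (idx (run a l).k) ((run a l).used (idx (run a l).k) + 1 + j)) =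
      patternBlock S (a 1 1) c (2 ^ (l + 1))
  · refine ⟨by rw [hb, hcond], ?_, ?_, ?_⟩ <;>
      · rw [run_succ]; unfold step; simp [hf, hcond]
  · exfalso; apply hf'; unfold step; simp [hf, hcond]

lemma forever_chain {l0 : ℕ} (H : ∀ l, l0 ≤ l → (run a l).flag ≠ none)
    {S : List X} {ph0 : ℕ} (hf : (run a l0).flag = some (S, ph0)) :
    ∀ t, (run a (l0 + t)).k = (run a l0).k ∧
      ((run a (l0 + t)).used (idx (run a l0).k) =
        (run a l0).used (idx (run a l0).k) + (2 ^ (l0 + 1 + t) - 2 ^ (l0 + 1))) ∧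
      ∃ c, (run a (l0 + t)).flag = some (S, c) ∧
        c % S.length = (ph0 + (2 ^ (l0 + 1 + t) - 2 ^ (l0 + 1))) % S.length := by
  intro t
  induction t with
  | zero => exact ⟨rfl, by simp, ph0, hf, by simp⟩
  | succ t ih =>
    obtain ⟨hk, hu, c, hfc, hcm⟩ := ih
    have hf' : (run a (l0 + t + 1)).flag ≠ none := H _ (by omega)
    obtain ⟨_, hfl', hk', hu'⟩ := flag_step_some a hfc hf'
    have hpow : 2 ^ (l0 + 1) ≤ 2 ^ (l0 + 1 + t) := Nat.pow_le_pow_right (by omega) (by omega)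
    refine ⟨?_, ?_, (c + 2 ^ (l0 + t + 1)) % S.length, ?_, ?_⟩
    · rw [show l0 + (t + 1) = l0 + t + 1 from rfl, hk', hk]
    · rw [show l0 + (t + 1) = l0 + t + 1 from rfl, hu' _]
      rw [hk]
      rw [if_pos rfl, hu]
      have e1 : 2 ^ (l0 + 1 + (t + 1)) = 2 * 2 ^ (l0 + 1 + t) := by
        rw [show l0 + 1 + (t + 1) = (l0 + 1 + t) + 1 by omega, pow_succ]; ring
      have e2 : 2 ^ (l0 + t + 1) = 2 ^ (l0 + 1 + t) := by
        rw [show l0 + t + 1 = l0 + 1 + t by omega]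
      omega
    · exact hfl'
    · have e1 : 2 ^ (l0 + 1 + (t + 1)) = 2 * 2 ^ (l0 + 1 + t) := by
        rw [show l0 + 1 + (t + 1) = (l0 + 1 + t) + 1 by omega, pow_succ]; ring
      have e2 : 2 ^ (l0 + t + 1) = 2 ^ (l0 + 1 + t) := by
        rw [show l0 + t + 1 = l0 + 1 + t by omega]
      calc ((c + 2 ^ (l0 + t + 1)) % S.length) % S.length
          = (c + 2 ^ (l0 + t + 1)) % S.length := Nat.mod_mod_of_dvd _ dvd_rfl
        _ = (c % S.length + 2 ^ (l0 + t + 1)) % S.length := (Nat.mod_add_mod _ _ _).symm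
        _ = ((ph0 + (2 ^ (l0 + 1 + t) - 2 ^ (l0 + 1))) % S.length + 2 ^ (l0 + t + 1)) % S.length := by
            rw [hcm]
        _ = (ph0 + (2 ^ (l0 + 1 + t) - 2 ^ (l0 + 1)) + 2 ^ (l0 + t + 1)) % S.length :=
            Nat.mod_add_mod _ _ _
        _ = (ph0 + (2 ^ (l0 + 1 + (t + 1)) - 2 ^ (l0 + 1))) % S.length := by
            congr 1; omega
  
end
section
set_option linter.unusedSectionVars false
variable {X : Type*} [DecidableEq X] (a : ℕ → ℕ → X)

lemma map_range_getD {f : ℕ → X} {N j : ℕ} (d : X) (hj : j < N) :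
    ((List.range N).map f).getD j d = f j := by
  rw [List.getD_eq_getElem _ _ (by simpa using hj)]; simp

lemma forever_formulas {l0 : ℕ} (H : ∀ l, l0 ≤ l → (run a l).flag ≠ none)
    {S : List X} {ph0 : ℕ} (hf : (run a l0).flag = some (S, ph0)) (t j : ℕ)
    (hj : j < 2 ^ (l0 + 1 + t)) :
    a (idx (run a l0).k)
        ((run a l0).used (idx (run a l0).k) + (2 ^ (l0 + 1 + t) - 2 ^ (l0 + 1)) + 1 + j)
      = S.getD ((ph0 + (2 ^ (l0 + 1 + t) - 2 ^ (l0 + 1)) + j) % S.length) (a 1 1) ∧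
    output a (2 ^ (l0 + 1 + t) - 1 + j)
      = S.getD ((ph0 + (2 ^ (l0 + 1 + t) - 2 ^ (l0 + 1)) + j) % S.length) (a 1 1) := by
  obtain ⟨hk, hu, c, hfc, hcm⟩ := forever_chain a H hf t
  have e2 : l0 + 1 + t = l0 + t + 1 := by omega
  rw [e2] at hj hcm hu ⊢
  have hf' : (run a (l0 + t + 1)).flag ≠ none := H _ (by omega)
  obtain ⟨hbp, -, -, -⟩ := flag_step_some a hfc hf'
  have hmod : (c + j) % S.length
      = (ph0 + (2 ^ (l0 + t + 1) - 2 ^ (l0 + 1)) + j) % S.length := by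
    rw [← Nat.mod_add_mod, hcm, Nat.mod_add_mod]
  have h2 : (block a (l0 + t + 1)).getD j (a 1 1) = S.getD ((c + j) % S.length) (a 1 1) := by
    rw [hbp]; exact patternBlock_getD hj
  have hb := block_eq a (l0 + t + 1)
  simp only [Nat.add_sub_cancel] at hb
  have h1 : (block a (l0 + t + 1)).getD j (a 1 1)
      = a (idx (run a (l0 + t)).k) ((run a (l0 + t)).used (idx (run a (l0 + t)).k) + 1 + j) := by
    rw [hb]; exact map_range_getD _ hj
  rw [hk, hu] at h1
  constructor
  · rw [← hmod, ← h2, h1]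
  · rw [output_block a (by omega) hj, h2, hmod]

lemma forever_conclusion {l0 : ℕ} (H : ∀ l, l0 ≤ l → (run a l).flag ≠ none) :
    EvPeriodic (output a) ∧ ∃ i, 1 ≤ i ∧ EvPeriodic (fun j => a i j) := by
  have hf0 : (run a l0).flag ≠ none := H l0 le_rfl
  obtain ⟨⟨S, ph0⟩, hf⟩ : ∃ x, (run a l0).flag = some x := Option.ne_none_iff_exists'.mp hf0
  have hS : S ≠ [] := flag_spec a l0 hf
  have hn : 1 ≤ S.length := List.length_pos_iff.mpr hS
  have hpow1 : (1:ℕ) ≤ 2 ^ (l0 + 1) := Nat.one_le_two_pow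
  have hOut : ∀ v, 2 ^ (l0 + 1) ≤ v →
      output a (v - 1) = S.getD ((ph0 + (v - 2 ^ (l0 + 1))) % S.length) (a 1 1) := by
    intro v hv
    obtain ⟨t, j, hj, hvj⟩ := exists_pow_decomp hv
    have hpow : 2 ^ (l0 + 1) ≤ 2 ^ (l0 + 1 + t) := Nat.pow_le_pow_right (by omega) (by omega)
    have hB := (forever_formulas a H hf t j hj).2
    rw [show v - 1 = 2 ^ (l0 + 1 + t) - 1 + j by omega, hB,
      show ph0 + (2 ^ (l0 + 1 + t) - 2 ^ (l0 + 1)) + j = ph0 + (v - 2 ^ (l0 + 1)) by omega]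
  have hIn : ∀ w, 1 ≤ w →
      a (idx (run a l0).k) ((run a l0).used (idx (run a l0).k) + w)
        = S.getD ((ph0 + (w - 1)) % S.length) (a 1 1) := by
    intro w hw
    have hv : 2 ^ (l0 + 1) ≤ w + 2 ^ (l0 + 1) - 1 := by omega
    obtain ⟨t, j, hj, hvj⟩ := exists_pow_decomp hv
    have hpow : 2 ^ (l0 + 1) ≤ 2 ^ (l0 + 1 + t) := Nat.pow_le_pow_right (by omega) (by omega)
    have hA := (forever_formulas a H hf t j hj).1
    rw [show (run a l0).used (idx (run a l0).k) + w
        = (run a l0).used (idx (run a l0).k) + (2 ^ (l0 + 1 + t) - 2 ^ (l0 + 1)) + 1 + j by omega,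
      hA, show ph0 + (2 ^ (l0 + 1 + t) - 2 ^ (l0 + 1)) + j = ph0 + (w - 1) by omega]
  constructor
  · refine ⟨S.length, hn, 2 ^ (l0 + 1), fun n' hn' => ?_⟩
    have h1 := hOut (n' + 1) (by omega)
    have h2 := hOut (n' + S.length + 1) (by omega)
    simp only [Nat.add_sub_cancel] at h1 h2
    rw [h1, h2, show ph0 + (n' + S.length + 1 - 2 ^ (l0 + 1))
        = ph0 + (n' + 1 - 2 ^ (l0 + 1)) + S.length by omega, Nat.add_mod_right]
  · refine ⟨idx (run a l0).k, idx_ge_one _, S.length, hn, (run a l0).used (idx (run a l0).k),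
      fun n' hn' => ?_⟩
    have h1 := hIn (n' - (run a l0).used (idx (run a l0).k)) (by omega)
    have h2 := hIn (n' - (run a l0).used (idx (run a l0).k) + S.length) (by omega)
    rw [show (run a l0).used (idx (run a l0).k)
        + (n' - (run a l0).used (idx (run a l0).k) + S.length) = n' + S.length by omega] at h2
    rw [show (run a l0).used (idx (run a l0).k)
        + (n' - (run a l0).used (idx (run a l0).k)) = n' by omega] at h1
    show a _ (n' + S.length) = a _ n'
    rw [h1, h2, show ph0 + (n' - (run a l0).used (idx (run a l0).k) + S.length - 1)
        = ph0 + (n' - (run a l0).used (idx (run a l0).k) - 1) + S.length by omega,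
      Nat.add_mod_right]

end
section
set_option linter.unusedSectionVars false
variable {X : Type*} [DecidableEq X] (a : ℕ → ℕ → X)

def Agrees (a : ℕ → ℕ → X) (i u : ℕ) (S : List X) (d : X) (ph : ℕ) : Prop :=
  ∀ j, a i (u + 1 + j) = S.getD ((ph + j) % S.length) d

def GoodAt (a : ℕ → ℕ → X) (l : ℕ) : Prop :=
  ∃ S ph, (run a l).flag = some (S, ph) ∧
    Agrees a (idx (run a l).k) ((run a l).used (idx (run a l).k)) S (a 1 1) ph

lemma goodAt_succ {l : ℕ} (h : GoodAt a l) : GoodAt a (l + 1) := by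
  obtain ⟨S, ph, hf, hA⟩ := h
  have hB : ((List.range (2 ^ (l + 1))).map fun j =>
      a (idx (run a l).k) ((run a l).used (idx (run a l).k) + 1 + j)) =
      patternBlock S (a 1 1) ph (2 ^ (l + 1)) := by
    unfold patternBlock
    exact List.map_congr_left fun j _ => hA j
  have hfl : (run a (l + 1)).flag = some (S, (ph + 2 ^ (l + 1)) % S.length) := by
    rw [run_succ]; unfold step; simp [hf, hB]
  have hk : (run a (l + 1)).k = (run a l).k := by
    rw [run_succ]; unfold step; simp [hf, hB]
  have hu := used_succ a l (idx (run a l).k)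
  rw [if_pos rfl] at hu
  refine ⟨S, (ph + 2 ^ (l + 1)) % S.length, hfl, ?_⟩
  rw [hk, hu]
  intro j
  have h1 := hA (2 ^ (l + 1) + j)
  rw [show (run a l).used (idx (run a l).k) + 2 ^ (l + 1) + 1 + j
      = (run a l).used (idx (run a l).k) + 1 + (2 ^ (l + 1) + j) by omega, h1,
    Nat.mod_add_mod, ← Nat.add_assoc]

lemma goodAt_forever {l : ℕ} (h : GoodAt a l) : ∀ l', l ≤ l' → (run a l').flag ≠ none := by
  have hall : ∀ t, GoodAt a (l + t) := by
    intro t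
    induction t with
    | zero => exact h
    | succ t ih => exact goodAt_succ a ih
  intro l' hl'
  obtain ⟨S, ph, hf, -⟩ := hall (l' - l)
  rw [show l + (l' - l) = l' by omega] at hf
  simp [hf]

lemma run_none_step {l : ℕ} (hfn : (run a l).flag = none) {p : ℕ}
    (hp : listPeriod? ((List.range (2 ^ (l + 1))).map fun j =>
      a (idx (run a l).k) ((run a l).used (idx (run a l).k) + 1 + j)) = some p) :
    (run a (l + 1)).flag = some ((((List.range (2 ^ (l + 1))).map fun j =>
      a (idx (run a l).k) ((run a l).used (idx (run a l).k) + 1 + j)).take p),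
      2 ^ (l + 1) % p) ∧ (run a (l + 1)).k = (run a l).k := by
  constructor <;> · rw [run_succ]; unfold step; simp [hfn, hp]

lemma goodAt_of_periodic_tail {l : ℕ} (hfn : (run a l).flag = none)
    {p : ℕ} (hp1 : 1 ≤ p) (hp2 : 2 * p ≤ 2 ^ (l + 1))
    (hper : ∀ t, a (idx (run a l).k) ((run a l).used (idx (run a l).k) + 1 + (t + p))
      = a (idx (run a l).k) ((run a l).used (idx (run a l).k) + 1 + t)) :
    GoodAt a (l + 1) := by
  set i := idx (run a l).k with hi
  set u := (run a l).used (idx (run a l).k) with hu0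
  set B := (List.range (2 ^ (l + 1))).map (fun j => a i (u + 1 + j)) with hBdef
  have hBlen : B.length = 2 ^ (l + 1) := by simp [hBdef]
  have hplt : p < B.length := by omega
  have hBget : ∀ j (hj : j < B.length), B[j] = a i (u + 1 + j) := by
    intro j hj
    simp [hBdef]
  have hdt : B.drop p = B.take (B.length - p) := by
    rw [drop_eq_take_iff (by omega)]
    intro j hj
    rw [hBget _ hj, hBget j (by omega)]
    exact hper j
  obtain ⟨p', hfind, hp'le⟩ := listPeriod?_le hp1 hplt hdt
  obtain ⟨hp'0, hp'lt, hdt', -⟩ := listPeriod?_eq_some hfind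
  have hx : ∀ t, a i (u + 1 + (t + p')) = a i (u + 1 + t) := by
    have hxp : ∀ j, j + p' < 2 ^ (l + 1) → a i (u + 1 + (j + p')) = a i (u + 1 + j) := by
      intro j hj
      have := (drop_eq_take_iff (by omega)).mp hdt' j (by omega)
      rw [hBget _ (by omega), hBget j (by omega)] at this
      exact this
    exact period_transfer (x := fun t => a i (u + 1 + t)) hp1 hper hxp (by omega)
  have hSlen : (B.take p').length = p' := by simp [hBlen]; omega
  have hval : ∀ t, a i (u + 1 + t) = (B.take p').getD (t % p') (a 1 1) := by
    intro t
    have hmod := periodic_mod (x := fun t => a i (u + 1 + t)) hp'0 hx t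
    rw [hmod]
    have htlt : t % p' < p' := Nat.mod_lt _ (by omega)
    rw [List.getD_eq_getElem _ _ (by omega), List.getElem_take, hBget _ (by omega)]
  obtain ⟨hfl, hk⟩ := run_none_step a hfn (p := p') (by rw [← hBdef]; exact hfind)
  refine ⟨B.take p', 2 ^ (l + 1) % p', by rw [hfl], ?_⟩
  have hu := used_succ a l (idx (run a l).k)
  rw [if_pos rfl] at hu
  rw [hk, ← hi, hu, ← hu0]
  intro j
  rw [show u + 2 ^ (l + 1) + 1 + j = u + 1 + (2 ^ (l + 1) + j) by omega, hval, hSlen,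
    Nat.mod_add_mod]

end
section
set_option linter.unusedSectionVars false
variable {X : Type*} [DecidableEq X] (a : ℕ → ℕ → X)

lemma step_some_match {L : ℕ} {S : List X} {c : ℕ} (hf : (run a L).flag = some (S, c))
    (hmatch : block a (L + 1) = patternBlock S (a 1 1) c (2 ^ (L + 1))) :
    (run a (L + 1)).flag = some (S, (c + 2 ^ (L + 1)) % S.length) := by
  have hb := block_eq a (L + 1)
  simp only [Nat.add_sub_cancel] at hb
  rw [hb] at hmatch
  rw [run_succ]; unfold step; simp [hf, hmatch]

lemma flags_of_output_periodic {l m r : ℕ} (hm1 : 1 ≤ m)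
    (hout : ∀ n, r < n → output a (n + m) = output a n)
    (hfn : (run a l).flag = none) (hl1 : 2 * m ≤ 2 ^ (l + 1)) (hl2 : r + 1 < 2 ^ (l + 1)) :
    ∀ l', l + 1 ≤ l' → (run a l').flag ≠ none := by
  have hN1 : (1:ℕ) ≤ 2 ^ (l + 1) := Nat.one_le_two_pow
  set i := idx (run a l).k with hi
  set u := (run a l).used (idx (run a l).k) with hu0
  set B := (List.range (2 ^ (l + 1))).map (fun j => a i (u + 1 + j)) with hBdef
  have hBlen : B.length = 2 ^ (l + 1) := by simp [hBdef]
  have hblk : block a (l + 1) = B := by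
    have := block_eq a (l + 1)
    simpa using this
  have hBget : ∀ j (hj : j < B.length), B[j] = output a (2 ^ (l + 1) - 1 + j) := by
    intro j hj
    rw [output_block a (by omega) (by omega), hblk, List.getD_eq_getElem _ _ hj]
  have hxm : ∀ t, output a (2 ^ (l + 1) - 1 + (t + m)) = output a (2 ^ (l + 1) - 1 + t) := by
    intro t
    have h := hout (2 ^ (l + 1) - 1 + t) (by omega)
    rw [show 2 ^ (l + 1) - 1 + (t + m) = 2 ^ (l + 1) - 1 + t + m by omega, h]
  have hmlt : m < B.length := by omega
  have hdt : B.drop m = B.take (B.length - m) := by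
    rw [drop_eq_take_iff (by omega)]
    intro j hj
    rw [hBget _ hj, hBget j (by omega)]
    exact hxm j
  obtain ⟨p, hfind, hple⟩ := listPeriod?_le hm1 hmlt hdt
  obtain ⟨hp0, hplt, hdt', -⟩ := listPeriod?_eq_some hfind
  have hx : ∀ t, output a (2 ^ (l + 1) - 1 + (t + p)) = output a (2 ^ (l + 1) - 1 + t) := by
    have hxp : ∀ j, j + p < 2 ^ (l + 1) →
        output a (2 ^ (l + 1) - 1 + (j + p)) = output a (2 ^ (l + 1) - 1 + j) := by
      intro j hj
      have h := (drop_eq_take_iff (le_of_lt hplt)).mp hdt' j (by omega)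
      rw [hBget _ (by omega), hBget j (by omega)] at h
      exact h
    exact period_transfer (x := fun t => output a (2 ^ (l + 1) - 1 + t)) hm1 hxm hxp (by omega)
  have hSlen : (B.take p).length = p := by simp [hBlen]; omega
  have hval : ∀ t, output a (2 ^ (l + 1) - 1 + t) = (B.take p).getD (t % p) (a 1 1) := by
    intro t
    have hmod := periodic_mod (x := fun t => output a (2 ^ (l + 1) - 1 + t)) hp0 hx t
    rw [hmod]
    have htlt : t % p < p := Nat.mod_lt _ (by omega)
    rw [List.getD_eq_getElem _ _ (by omega), List.getElem_take, hBget _ (by omega)]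
  obtain ⟨hfl, hk⟩ := run_none_step a hfn (p := p) (by rw [← hBdef]; exact hfind)
  have main : ∀ t, ∃ c, (run a (l + 1 + t)).flag = some (B.take p, c) ∧
      c % p = (2 ^ (l + 1 + t + 1) - 2 ^ (l + 1)) % p := by
    intro t
    induction t with
    | zero =>
      refine ⟨2 ^ (l + 1) % p, by rw [← hBdef] at hfl; exact hfl, ?_⟩
      rw [Nat.mod_mod_of_dvd _ dvd_rfl]
      congr 1
      have e1 : 2 ^ (l + 1 + 0 + 1) = 2 * 2 ^ (l + 1) := by
        rw [show l + 1 + 0 + 1 = (l + 1) + 1 by omega, pow_succ]; ring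
      omega
    | succ t ih =>
      obtain ⟨c, hfc, hcm⟩ := ih
      have hD : 2 ^ (l + 1) ≤ 2 ^ (l + 1 + t + 1) := Nat.pow_le_pow_right (by omega) (by omega)
      have hmatch : block a (l + 1 + t + 1)
          = patternBlock (B.take p) (a 1 1) c (2 ^ (l + 1 + t + 1)) := by
        apply List.ext_getElem
        · rw [block_length]; simp [patternBlock]
        · intro j hj1 hj2
          rw [block_length] at hj1
          have hL1 := output_block a (l := l + 1 + t + 1) (by omega) hj1
          have hv := hval (2 ^ (l + 1 + t + 1) - 2 ^ (l + 1) + j)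
          rw [show 2 ^ (l + 1) - 1 + (2 ^ (l + 1 + t + 1) - 2 ^ (l + 1) + j)
              = 2 ^ (l + 1 + t + 1) - 1 + j by omega] at hv
          rw [← List.getD_eq_getElem (block a (l + 1 + t + 1)) (a 1 1) (by rw [block_length]; exact hj1),
            ← List.getD_eq_getElem (patternBlock (B.take p) (a 1 1) c (2 ^ (l + 1 + t + 1))) (a 1 1) hj2,
            patternBlock_getD hj1, ← hL1, hv, hSlen]
          congr 1
          rw [← Nat.mod_add_mod c, hcm, Nat.mod_add_mod]
      have hstep := step_some_match a hfc hmatch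
      refine ⟨(c + 2 ^ (l + 1 + t + 1)) % (B.take p).length, hstep, ?_⟩
      rw [hSlen, Nat.mod_mod_of_dvd _ dvd_rfl, ← Nat.mod_add_mod c, hcm, Nat.mod_add_mod]
      congr 1
      have e1 : 2 ^ (l + 1 + (t + 1) + 1) = 2 * 2 ^ (l + 1 + t + 1) := by
        rw [show l + 1 + (t + 1) + 1 = (l + 1 + t + 1) + 1 by omega, pow_succ]; ring
      omega
  intro l' hl'
  obtain ⟨c, hfc, -⟩ := main (l' - (l + 1))
  rw [show l + 1 + (l' - (l + 1)) = l' by omega] at hfc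
  simp [hfc]

end
section
set_option linter.unusedSectionVars false
variable {X : Type*} [DecidableEq X] (a : ℕ → ℕ → X)

lemma tri_succ (n : ℕ) : tri (n + 1) = tri n + (n + 1) := by
  have h1 := tri_eight n
  have h2 := tri_eight (n + 1)
  have e : (n + 1) * (n + 1 + 1) = n * (n + 1) + 2 * (n + 1) := by ring
  omega

lemma tri_mono {n m : ℕ} (h : n ≤ m) : tri n ≤ tri m := by
  induction m with
  | zero => simp_all
  | succ k ih =>
    rcases Nat.lt_or_ge n (k + 1) with h' | h'
    · have := ih (by omega)
      have := tri_succ k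
      omega
    · have : n = k + 1 := by omega
      subst this; rfl

lemma reach (Hinf : ∀ l0, ∃ l, l0 ≤ l ∧ (run a l).flag = none) :
    ∀ K, 1 ≤ K → ∃ l, (run a l).k = K ∧ (run a l).flag = none := by
  intro K hK
  induction K with
  | zero => omega
  | succ K ih =>
    rcases Nat.eq_or_lt_of_le hK with h1 | h1
    · exact ⟨0, by simp [run, ← h1], rfl⟩
    · obtain ⟨l, hkl, hfl⟩ := ih (by omega)
      have hex : ∃ t, (run a (l + 1 + t)).flag = none := by
        obtain ⟨l', hl', hf'⟩ := Hinf (l + 1)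
        exact ⟨l' - (l + 1), by rw [show l + 1 + (l' - (l + 1)) = l' by omega]; exact hf'⟩
      set t0 := Nat.find hex with ht0
      have hconst : ∀ t, t ≤ t0 → (run a (l + t)).k = K := by
        intro t ht
        induction t with
        | zero => exact hkl
        | succ t iht =>
          have h1 := iht (by omega)
          have hne : (run a (l + 1 + t)).flag ≠ none := Nat.find_min hex (by omega)
          rcases k_flag_succ a (l + t) with ⟨h2, _⟩ | ⟨_, h3⟩
          · exact absurd (by rw [show l + t + 1 = l + 1 + t by omega] at h2; exact h2) hne
          · rw [show l + (t + 1) = l + t + 1 from rfl, h3, h1]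
      have hft0 : (run a (l + 1 + t0)).flag = none := Nat.find_spec hex
      rcases k_flag_succ a (l + t0) with ⟨hfn', hkk⟩ | ⟨hne, _⟩
      · refine ⟨l + 1 + t0, ?_, hft0⟩
        rw [show l + 1 + t0 = l + t0 + 1 by omega, hkk, hconst t0 le_rfl]
      · exact absurd (by rw [show l + t0 + 1 = l + 1 + t0 by omega]; exact hft0) hne

end
/-- Main theorem: the output of the sequence interleaving algorithm on
a countable family of sequences is eventually periodic if and only if at least one
input sequence is eventually periodic. -/
theorem stmt12 {X : Type*} [DecidableEq X] (a : ℕ → ℕ → X) :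
    EvPeriodic (output a) ↔ ∃ i, 1 ≤ i ∧ EvPeriodic (fun j => a i j) := by
  by_cases Hsome : ∃ l0, ∀ l, l0 ≤ l → (run a l).flag ≠ none
  · obtain ⟨l0, H⟩ := Hsome
    have h := forever_conclusion a H
    exact ⟨fun _ => h.2, fun _ => h.1⟩
  · push_neg at Hsome
    constructor
    · rintro ⟨m, hm1, r, hout⟩
      obtain ⟨l, hl, hfn⟩ := Hsome (m + r + 2)
      have hp1 : m < 2 ^ m := Nat.lt_two_pow_self (n := m)
      have hp2 : 2 ^ (m + 1) ≤ 2 ^ (l + 1) := Nat.pow_le_pow_right (by omega) (by omega)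
      have hp3 : l + 1 < 2 ^ (l + 1) := Nat.lt_two_pow_self (n := l + 1)
      have hb1 : 2 * m ≤ 2 ^ (l + 1) := by rw [pow_succ] at hp2; omega
      have hb2 : r + 1 < 2 ^ (l + 1) := by omega
      have Hflags := flags_of_output_periodic a hm1 hout hfn hb1 hb2
      exact (forever_conclusion a Hflags).2
    · rintro ⟨i0, hi0, m, hm1, r, hper⟩
      -- first visit: pump `used i0` above r
      set n1 := max (i0 - 1) (r + 1) with hn1
      set K1 := tri n1 + (i0 - 1) with hK1
      have htn1 := tri_ge n1
      have hidx1 : idx K1 = i0 := by rw [hK1, idx_tri (by omega)]; omega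
      obtain ⟨l1, hkl1, hfl1⟩ := reach a Hsome K1 (by omega)
      have hK1l1 : K1 ≤ l1 + 1 := hkl1 ▸ k_le a l1
      have hused1 : (run a (l1 + 1)).used i0 = (run a l1).used i0 + 2 ^ (l1 + 1) := by
        rw [used_succ, hkl1, hidx1, if_pos rfl]
      have hpK1 : K1 < 2 ^ K1 := Nat.lt_two_pow_self (n := K1)
      have hpK1' : 2 ^ K1 ≤ 2 ^ (l1 + 1) := Nat.pow_le_pow_right (by omega) (by omega)
      have husedr : r < (run a (l1 + 1)).used i0 := by omega
      -- second visit
      set n2 := n1 + m + 1 with hn2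
      set K2 := tri n2 + (i0 - 1) with hK2
      have htn2 := tri_ge n2
      have hidx2 : idx K2 = i0 := by rw [hK2, idx_tri (by omega)]; omega
      have htlt : tri n1 < tri n2 := by
        have h1 := tri_mono (show n1 + 1 ≤ n2 by omega)
        have h2 := tri_succ n1
        omega
      obtain ⟨l2, hkl2, hfl2⟩ := reach a Hsome K2 (by omega)
      have hl12 : l1 + 1 ≤ l2 := by
        by_contra hc
        have := k_mono a (show l2 ≤ l1 by omega)
        rw [hkl1, hkl2] at this
        omega
      have hused2 : r < (run a l2).used i0 :=
        lt_of_lt_of_le husedr (used_mono a hl12 i0)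
      have hK2l2 : K2 ≤ l2 + 1 := hkl2 ▸ k_le a l2
      have hpm : m < 2 ^ m := Nat.lt_two_pow_self (n := m)
      have hpm' : 2 ^ (m + 1) ≤ 2 ^ (l2 + 1) := Nat.pow_le_pow_right (by omega) (by omega)
      have hb1 : 2 * m ≤ 2 ^ (l2 + 1) := by rw [pow_succ] at hpm'; omega
      have hgood : GoodAt a (l2 + 1) := by
        apply goodAt_of_periodic_tail a hfl2 hm1 hb1
        intro t
        rw [hkl2, hidx2]
        have h := hper ((run a l2).used i0 + 1 + t) (by omega)
        simp only at h
        rw [show (run a l2).used i0 + 1 + (t + m) = (run a l2).used i0 + 1 + t + m by omega, h]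
      exact (forever_conclusion a (goodAt_forever a hgood)).1
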